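/- arXiv:2409.00697 — 2 statements merged into one kernel-verified Lean document; each statement's English description precedes it below -/
import Mathlib

section
/- Let G be a connected graph on n vertices with diam(G) = 3. If there exists a maximal independent set A of G with |A| = i(G) such that the graph D(G) − A, obtained from the diametrical graph D(G) by deleting the vertices of A, has an isolated vertex, then Γρ(G) = n − i(G) + 1. -/
open SimpleGraph

/-- A packing `k`-coloring of `G`: colors in `{1,…,k}` and vertices of equal color `i`
are at distance greater than `i` (vertices in different components are unconstrained). -/
def IsPackingColoring {V : Type*} (G : SimpleGraph V) (k : ℕ) (c : V → ℕ) : Prop :=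
  (∀ v, 1 ≤ c v ∧ c v ≤ k) ∧
  ∀ u v, u ≠ v → c u = c v → G.Reachable u v → c u < G.dist u v

/-- A greedy packing `k`-coloring: a packing `k`-coloring that uses color `k` and in which
every vertex of color `i ≥ 2` has, for every `j < i`, a vertex of color `j`
at distance at most `j`. -/
def IsGreedyPackingColoring {V : Type*} (G : SimpleGraph V) (k : ℕ) (c : V → ℕ) : Prop :=
  IsPackingColoring G k c ∧ (∃ v, c v = k) ∧
  ∀ v, ∀ j, 1 ≤ j → j < c v → ∃ u, c u = j ∧ G.Reachable u v ∧ G.dist u v ≤ j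

/-- The Grundy packing chromatic number: the largest `k` admitting a greedy packing
`k`-coloring. -/
noncomputable def grundyPackingChromaticNumber {V : Type*} (G : SimpleGraph V) : ℕ :=
  sSup {k | ∃ c : V → ℕ, IsGreedyPackingColoring G k c}

/-- The packing chromatic number: the smallest `k` admitting a packing `k`-coloring. -/
noncomputable def packingChromaticNumber {V : Type*} (G : SimpleGraph V) : ℕ :=
  sInf {k | ∃ c : V → ℕ, IsPackingColoring G k c}

/-- `s` is an independent set of `G`. -/
def IsIndepFinset {V : Type*} (G : SimpleGraph V) (s : Finset V) : Prop :=
  ∀ u ∈ s, ∀ v ∈ s, ¬ G.Adj u v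

/-- `s` is a maximal independent set of `G`. -/
def IsMaxIndepFinset {V : Type*} (G : SimpleGraph V) (s : Finset V) : Prop :=
  IsIndepFinset G s ∧ ∀ t : Finset V, IsIndepFinset G t → s ⊆ t → s = t

/-- The independent domination number `i(G)`:
the minimum cardinality of a maximal independent set. -/
noncomputable def indepDomNum {V : Type*} (G : SimpleGraph V) [Fintype V] : ℕ :=
  sInf {n | ∃ s : Finset V, IsMaxIndepFinset G s ∧ s.card = n}

/-- The graph `G^ℓ`: same vertices, `u ∼ v` iff `u ≠ v` and `d_G(u,v) ≤ ℓ`. -/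
def distPow {V : Type*} (G : SimpleGraph V) (ℓ : ℕ) : SimpleGraph V where
  Adj u v := u ≠ v ∧ G.dist u v ≤ ℓ
  symm := by
    constructor
    rintro u v ⟨h1, h2⟩
    exact ⟨h1.symm, by rwa [SimpleGraph.dist_comm]⟩
  loopless := by constructor; rintro v ⟨h, _⟩; exact h rfl

/-- The graph `G(k)`: vertex set is `k` disjoint copies of `V(G)`, the copy `i : Fin k`
playing the role of `G^(i+1)`; the `k` copies of each vertex form a clique, and within the
`i`-th copy two distinct vertices are adjacent iff their distance in `G` is at most `i+1`. -/
def levelGraph {V : Type*} (G : SimpleGraph V) (k : ℕ) : SimpleGraph (V × Fin k) where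
  Adj p q := (p.1 = q.1 ∧ p.2 ≠ q.2) ∨
    (p.1 ≠ q.1 ∧ p.2 = q.2 ∧ G.dist p.1 q.1 ≤ (p.2 : ℕ) + 1)
  symm := by
    constructor
    rintro p q (⟨h1, h2⟩ | ⟨h1, h2, h3⟩)
    · exact Or.inl ⟨h1.symm, h2.symm⟩
    · refine Or.inr ⟨h1.symm, h2.symm, ?_⟩
      rw [SimpleGraph.dist_comm, ← h2]
      exact h3
  loopless := by constructor; rintro p (⟨_, h⟩ | ⟨h, _, _⟩) <;> exact h rfl

/-- `A` is a maximal independent set of the subgraph of `H` induced on `S`. -/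
def IsMaxIndepSetOn {V : Type*} (H : SimpleGraph V) (S : Set V) (A : Set V) : Prop :=
  A ⊆ S ∧ (∀ u ∈ A, ∀ v ∈ A, ¬ H.Adj u v) ∧
  ∀ B : Set V, B ⊆ S → (∀ u ∈ B, ∀ v ∈ B, ¬ H.Adj u v) → A ⊆ B → A = B

/-- The eccentricity of a vertex. -/
noncomputable def eccent {V : Type*} (G : SimpleGraph V) [Fintype V] (v : V) : ℕ :=
  Finset.univ.sup (fun u => G.dist v u)

/-- The radius of a graph. -/
noncomputable def graphRadius {V : Type*} (G : SimpleGraph V) [Fintype V] : ℕ :=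
  sInf (Set.range (eccent G))

/-- The diameter of a graph. -/
noncomputable def graphDiam {V : Type*} (G : SimpleGraph V) [Fintype V] : ℕ :=
  Finset.univ.sup (eccent G)

/-- The diametrical graph `D(G)`: `x ∼ y` iff `d_G(x,y) = diam(G)`. -/
noncomputable def diamGraph {V : Type*} (G : SimpleGraph V) [Fintype V] : SimpleGraph V where
  Adj u v := u ≠ v ∧ G.dist u v = graphDiam G
  symm := by
    constructor
    rintro u v ⟨h1, h2⟩
    exact ⟨h1.symm, by rwa [SimpleGraph.dist_comm]⟩
  loopless := by constructor; rintro v ⟨h, _⟩; exact h rfl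

/-- `Q` is a clique of the subgraph of `H` induced on `S`. -/
def IsCliqueFinsetOn {V : Type*} (H : SimpleGraph V) (S : Set V) (Q : Finset V) : Prop :=
  ↑Q ⊆ S ∧ ∀ u ∈ Q, ∀ v ∈ Q, u ≠ v → H.Adj u v

/-- `Q` is a maximal clique of the subgraph of `H` induced on `S`. -/
def IsMaxCliqueFinsetOn {V : Type*} (H : SimpleGraph V) (S : Set V) (Q : Finset V) : Prop :=
  IsCliqueFinsetOn H S Q ∧ ∀ R : Finset V, IsCliqueFinsetOn H S R → Q ⊆ R → Q = R

/-- The join `G ∨ H` of two graphs. -/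
def joinGraph {V W : Type*} (G : SimpleGraph V) (H : SimpleGraph W) :
    SimpleGraph (V ⊕ W) where
  Adj p q := match p, q with
    | .inl u, .inl v => G.Adj u v
    | .inr u, .inr v => H.Adj u v
    | .inl _, .inr _ => True
    | .inr _, .inl _ => True
  symm := by
    constructor
    rintro (u | u) (v | v) h
    · exact G.adj_symm h
    · trivial
    · trivial
    · exact H.adj_symm h
  loopless := by
    constructor
    rintro (u | u) h
    · exact G.irrefl h
    · exact H.irrefl h

/-- `K_{n,n}` minus a perfect matching: parts `{u_i}` and `{v_i}`, with `u_i ∼ v_j` iff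
`i ≠ j`. -/
def completeBipartiteMinusMatching (n : ℕ) : SimpleGraph (Fin n ⊕ Fin n) where
  Adj p q := match p, q with
    | .inl i, .inr j => i ≠ j
    | .inr i, .inl j => i ≠ j
    | _, _ => False
  symm := by constructor; rintro (i | i) (j | j) h <;> first | exact h.symm | exact h
  loopless := by constructor; rintro (i | i) h <;> exact h

/-
Upper bound: in a greedy packing `k`-coloring the vertices of color `1` form a maximal independent
set, so there are at least `i(G)` of them, and each of the colors `2, …, k` is used, so
`i(G) + (k - 1) ≤ n`. Lower bound: color a minimum maximal independent set `A` with `1`, the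
vertex `v` isolated in `D(G) - A` with `2`, and the remaining vertices with distinct colors
`3, 4, …`. Since `v` is not at distance `3 = diam(G)` from any vertex outside `A`, it lies within
distance `2` of all of them, and every other greedy condition holds because `A` dominates `G`
and all distances are at most `3`.
-/

open Finset

section

variable {V : Type*}

theorem dist_le_graphDiam [Fintype V] (G : SimpleGraph V) (u w : V) :
    G.dist u w ≤ graphDiam G :=
  (Finset.le_sup (f := fun x => G.dist u x) (mem_univ w)).trans
    (Finset.le_sup (f := _root_.eccent G) (mem_univ u))

theorem dist_le_graphDiam_sub_one_of_not_diamGraph_adj [Fintype V] {G : SimpleGraph V}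
    {v w : V} (hvw : ¬ (diamGraph G).Adj v w) : G.dist v w ≤ graphDiam G - 1 := by
  obtain rfl | hne := eq_or_ne v w
  · simp
  have hle := dist_le_graphDiam G v w
  have hne' : G.dist v w ≠ graphDiam G := fun h => hvw ⟨hne, h⟩
  omega

theorem IsMaxIndepFinset.exists_adj {G : SimpleGraph V} {A : Finset V}
    (hA : IsMaxIndepFinset G A) {w : V} (hw : w ∉ A) : ∃ u ∈ A, G.Adj u w := by
  classical
  by_contra! hc
  have hindep : IsIndepFinset G (insert w A) := by
    simp only [IsIndepFinset, mem_insert, forall_eq_or_imp]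
    refine ⟨⟨G.irrefl, fun y hy hwy => hc y hy hwy.symm⟩, fun x hx => ⟨hc x hx, hA.1 x hx⟩⟩
  exact hw (hA.2 _ hindep (subset_insert w A) ▸ mem_insert_self w A)

namespace IsGreedyPackingColoring

variable {G : SimpleGraph V} {k : ℕ} {c : V → ℕ}

theorem isMaxIndepFinset_colorOne [Fintype V] (hc : IsGreedyPackingColoring G k c) :
    IsMaxIndepFinset G {w | c w = 1} := by
  obtain ⟨⟨hbound, hpack⟩, -, hgreedy⟩ := hc
  refine ⟨fun x hx y hy hxy => ?_, fun t ht hsub => ?_⟩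
  · simp only [mem_filter, mem_univ, true_and] at hx hy
    have := hpack x y hxy.ne (hx.trans hy.symm) hxy.reachable
    rw [hx, dist_eq_one_iff_adj.mpr hxy] at this
    exact lt_irrefl 1 this
  refine hsub.antisymm fun w hw => ?_
  by_contra hw1
  simp only [mem_filter, mem_univ, true_and] at hw1
  obtain ⟨u, hu1, hreach, hdist⟩ := hgreedy w 1 le_rfl (by have := (hbound w).1; omega)
  have huw : u ≠ w := by rintro rfl; exact hw1 hu1
  have hadj : G.Adj u w :=
    dist_eq_one_iff_adj.mp (le_antisymm hdist (hreach.pos_dist_of_ne huw))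
  exact ht u (hsub (by simpa using hu1)) w hw hadj

theorem exists_eq (hc : IsGreedyPackingColoring G k c) {j : ℕ} (hj1 : 1 ≤ j) (hjk : j ≤ k) :
    ∃ u, c u = j := by
  obtain ⟨-, ⟨v, hv⟩, hgreedy⟩ := hc
  obtain rfl | hlt := hjk.eq_or_lt
  · exact ⟨v, hv⟩
  obtain ⟨u, hu, -⟩ := hgreedy v j hj1 (hv ▸ hlt)
  exact ⟨u, hu⟩

theorem le_card_sub_indepDomNum_add_one [Fintype V] (hc : IsGreedyPackingColoring G k c) :
    k ≤ Fintype.card V - indepDomNum G + 1 := by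
  classical
  set C₁ : Finset V := {w | c w = 1}
  have hi : indepDomNum G ≤ #C₁ := Nat.sInf_le ⟨C₁, hc.isMaxIndepFinset_colorOne, rfl⟩
  have hsurj : Set.SurjOn c ↑(C₁ᶜ) ↑(Icc 2 k) := fun j hj => by
    simp only [coe_Icc, Set.mem_Icc] at hj
    obtain ⟨u, hu⟩ := hc.exists_eq (by omega) hj.2
    refine ⟨u, ?_, hu⟩
    simp only [compl_filter, coe_filter, mem_univ, true_and, Set.mem_ofPred_eq, hu, C₁]
    omega
  have hcard := card_le_card_of_surjOn c hsurj
  rw [Nat.card_Icc] at hcard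
  have := card_compl_add_card C₁
  omega

end IsGreedyPackingColoring

theorem isGreedyPackingColoring_of_colorClasses {G : SimpleGraph V} (hG : G.Connected)
    (hdiam : ∀ u w, G.dist u w ≤ 3) {A : Finset V} (hA : IsMaxIndepFinset G A) {v : V}
    (hv : ∀ w ∉ A, G.dist v w ≤ 2) {k : ℕ} (hk : 2 ≤ k) {c : V → ℕ}
    (hc₁ : ∀ w, c w = 1 ↔ w ∈ A) (hc₂ : ∀ w, c w = 2 ↔ w = v)
    (hc_inj : ∀ u w, 3 ≤ c u → c u = c w → u = w) (hc_mem : ∀ w, 1 ≤ c w ∧ c w ≤ k)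
    (hc_surj : ∀ j, 2 ≤ j → j ≤ k → ∃ u, c u = j) : IsGreedyPackingColoring G k c := by
  refine ⟨⟨hc_mem, fun u w huw hcuw hreach => ?_⟩, hc_surj k hk le_rfl, fun w j hj1 hjw => ?_⟩
  · obtain h1 | h2 | h3 : c u = 1 ∨ c u = 2 ∨ 3 ≤ c u := by have := (hc_mem u).1; omega
    · have hadj : ¬ G.Adj u w := hA.1 u ((hc₁ u).1 h1) w ((hc₁ w).1 (hcuw ▸ h1))
      have hpos := hreach.pos_dist_of_ne huw
      have hne : G.dist u w ≠ 1 := fun h => hadj (dist_eq_one_iff_adj.mp h)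
      omega
    · exact absurd (((hc₂ u).1 h2).trans ((hc₂ w).1 (hcuw ▸ h2)).symm) huw
    · exact absurd (hc_inj u w h3 hcuw) huw
  have hwA : w ∉ A := fun hw => by rw [(hc₁ w).2 hw] at hjw; omega
  obtain rfl | rfl | hj3 : j = 1 ∨ j = 2 ∨ 3 ≤ j := by omega
  · obtain ⟨u, hu, hadj⟩ := hA.exists_adj hwA
    exact ⟨u, (hc₁ u).2 hu, hadj.reachable, (dist_eq_one_iff_adj.mpr hadj).le⟩
  · exact ⟨v, (hc₂ v).2 rfl, hG.preconnected v w, hv w hwA⟩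
  · obtain ⟨u, hu⟩ := hc_surj j (by omega) (by have := (hc_mem w).2; omega)
    exact ⟨u, hu, hG.preconnected u w, (hdiam u w).trans hj3⟩

section oneTwoDistinctColoring

variable [Fintype V]

open Classical in
noncomputable def oneTwoDistinctColoring (A : Finset V) (v : V) (w : V) : ℕ :=
  if h : w ∈ (insert v A)ᶜ then ((insert v A)ᶜ.equivFin ⟨w, h⟩ : ℕ) + 3
  else if w = v then 2 else 1

variable {A : Finset V} {v : V}

theorem oneTwoDistinctColoring_eq_one_iff (hv : v ∉ A) (w : V) :
    oneTwoDistinctColoring A v w = 1 ↔ w ∈ A := by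
  classical
  unfold oneTwoDistinctColoring
  split_ifs with h hwv <;> (try rw [mem_compl, mem_insert] at h) <;> simp_all

theorem oneTwoDistinctColoring_eq_two_iff (w : V) :
    oneTwoDistinctColoring A v w = 2 ↔ w = v := by
  classical
  unfold oneTwoDistinctColoring
  split_ifs with h hwv <;> (try rw [mem_compl, mem_insert] at h) <;> simp_all

theorem eq_of_three_le_oneTwoDistinctColoring {u w : V}
    (hu : 3 ≤ oneTwoDistinctColoring A v u)
    (huw : oneTwoDistinctColoring A v u = oneTwoDistinctColoring A v w) : u = w := by
  classical
  unfold oneTwoDistinctColoring at hu huw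
  split_ifs at hu huw with h₁ h₂ <;> try omega
  exact congrArg Subtype.val
    ((insert v A)ᶜ.equivFin.injective (Fin.ext (Nat.add_right_cancel huw)))

theorem oneTwoDistinctColoring_mem_Icc (hv : v ∉ A) (w : V) :
    1 ≤ oneTwoDistinctColoring A v w ∧
      oneTwoDistinctColoring A v w ≤ Fintype.card V - #A + 1 := by
  classical
  unfold oneTwoDistinctColoring
  have hcard := card_compl_add_card (insert v A)
  rw [card_insert_of_notMem hv] at hcard
  split_ifs with h
  · have := ((insert v A)ᶜ.equivFin ⟨w, h⟩).2
    omega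
  all_goals omega

theorem exists_oneTwoDistinctColoring_eq (hv : v ∉ A) {j : ℕ} (hj2 : 2 ≤ j)
    (hj : j ≤ Fintype.card V - #A + 1) : ∃ u, oneTwoDistinctColoring A v u = j := by
  classical
  obtain rfl | hj3 := hj2.eq_or_lt
  · exact ⟨v, (oneTwoDistinctColoring_eq_two_iff v).2 rfl⟩
  have hcard := card_compl_add_card (insert v A)
  rw [card_insert_of_notMem hv] at hcard
  set u := (insert v A)ᶜ.equivFin.symm ⟨j - 3, by omega⟩
  refine ⟨u, ?_⟩
  unfold oneTwoDistinctColoring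
  rw [dif_pos u.2]
  simp only [u, Subtype.coe_eta, Equiv.apply_symm_apply]
  omega

theorem exists_isGreedyPackingColoring_card_sub_card_add_one {G : SimpleGraph V}
    (hG : G.Connected) (hdiam : ∀ u w, G.dist u w ≤ 3) {A : Finset V}
    (hA : IsMaxIndepFinset G A) {v : V} (hvA : v ∉ A) (hv : ∀ w ∉ A, G.dist v w ≤ 2) :
    ∃ c, IsGreedyPackingColoring G (Fintype.card V - #A + 1) c := by
  have hk : 2 ≤ Fintype.card V - #A + 1 := by
    have := card_lt_univ_of_notMem hvA
    omega
  exact ⟨_, isGreedyPackingColoring_of_colorClasses hG hdiam hA hv hk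
    (oneTwoDistinctColoring_eq_one_iff hvA) oneTwoDistinctColoring_eq_two_iff
    (fun _ _ => eq_of_three_le_oneTwoDistinctColoring) (oneTwoDistinctColoring_mem_Icc hvA)
    (fun _ => exists_oneTwoDistinctColoring_eq hvA)⟩

end oneTwoDistinctColoring

end

/-- If `G` is connected on `n` vertices with `diam(G) = 3` and there exists a
maximal independent set `A` with `|A| = i(G)` such that `D(G) - A` has an isolated vertex,
then `Γρ(G) = n - i(G) + 1`. -/
theorem grundyPackingChromaticNumber_of_diam_three_singleton {V : Type*} [Fintype V]
    (G : SimpleGraph V) (hG : G.Connected) (hd : graphDiam G = 3)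
    (h : ∃ A : Finset V, IsMaxIndepFinset G A ∧ A.card = indepDomNum G ∧
      ∃ v : V, v ∉ A ∧ ∀ u : V, u ∉ A → ¬ (diamGraph G).Adj v u) :
    grundyPackingChromaticNumber G = Fintype.card V - indepDomNum G + 1 := by
  obtain ⟨A, hA, hAcard, v, hvA, hv⟩ := h
  have hdiam (u w : V) : G.dist u w ≤ 3 := hd ▸ dist_le_graphDiam G u w
  refine IsGreatest.csSup_eq ⟨?_, fun k ⟨c, hc⟩ => hc.le_card_sub_indepDomNum_add_one⟩
  rw [← hAcard]
  exact exists_isGreedyPackingColoring_card_sub_card_add_one hG hdiam hA hvA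
    fun w hw => by simpa [hd] using dist_le_graphDiam_sub_one_of_not_diamGraph_adj (hv w hw)
end

section
/- Let n ≥ 4 and let G = K_{n,n} − M be the graph obtained from the complete bipartite graph with parts {u_1,…,u_n} and {v_1,…,v_n} by deleting the perfect matching M = {u_i v_i : 1 ≤ i ≤ n}. Then χρ(G) = n + 1. -/
open SimpleGraph

open Finset

/-! Every packing coloring puts at most one vertex in each color `j ≥ 3`, because the graph has
diameter `3`. A color-`2` class has pairwise distances at least `3`, and the only such pairs are
the matched pairs `{u_a, v_a}`. An independent set lies on one side or inside a matched pair.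
Hence colors `1` and `2` together cover at most `n + 1` vertices (at most `n - 1 + 2` if a
matched pair is colored `2`), so `2n ≤ (n + 1) + (k - 2)`. Conversely, coloring one side with `1`
and the other side with `2, …, n + 1` is a packing coloring. -/

section PackingColoring

variable {V : Type*} {G : SimpleGraph V} {k : ℕ} {c : V → ℕ}

lemma packingChromaticNumber_eq (hk : ∃ c, IsPackingColoring G k c)
    (hmin : ∀ k' c, IsPackingColoring G k' c → k ≤ k') : packingChromaticNumber G = k :=
  le_antisymm (Nat.sInf_le hk) (le_csInf ⟨k, hk⟩ fun k' ⟨c, hc⟩ => hmin k' c hc)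

def colorClass [Fintype V] (c : V → ℕ) (j : ℕ) : Finset V :=
  univ.filter (c · = j)

@[simp]
lemma mem_colorClass [Fintype V] {j : ℕ} {v : V} : v ∈ colorClass c j ↔ c v = j := by
  simp [colorClass]

namespace IsPackingColoring

lemma not_adj (hc : IsPackingColoring G k c) {u v : V} (hu : c u = 1) (hv : c v = 1) :
    ¬ G.Adj u v := fun huv => by
  have := hc.2 u v huv.ne (hu.trans hv.symm) huv.reachable
  rw [dist_eq_one_iff_adj.mpr huv, hu] at this
  exact lt_irrefl 1 this

lemma card_colorClass_le_one [Fintype V] (hc : IsPackingColoring G k c) (hG : G.Connected)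
    {j : ℕ} (hdist : ∀ u v, G.dist u v ≤ j) : #(colorClass c j) ≤ 1 := by
  refine card_le_one.mpr fun u hu v hv => ?_
  by_contra huv
  rw [mem_colorClass] at hu hv
  have := hc.2 u v huv (hu.trans hv.symm) (hG u v)
  have := hdist u v
  omega

lemma card_le_sum_colorClass [Fintype V] (hc : IsPackingColoring G k c) :
    Fintype.card V ≤ ∑ j ∈ Icc 1 k, #(colorClass c j) := by
  rw [← card_univ, card_eq_sum_card_fiberwise
    fun v _ => mem_Icc.mpr (hc.1 v)]
  rfl

lemma card_le_of_dist_le_three [Fintype V] (hc : IsPackingColoring G k c) (hG : G.Connected)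
    (hdist : ∀ u v, G.dist u v ≤ 3) :
    Fintype.card V ≤ #(colorClass c 1) + #(colorClass c 2) + (k - 2) := by
  have hsplit : Icc 1 k ⊆ insert 1 (insert 2 (Icc 3 k)) := by
    intro j
    simp only [mem_Icc, mem_insert]
    omega
  have htail : ∑ j ∈ Icc 3 k, #(colorClass c j) ≤ k - 2 := by
    calc ∑ j ∈ Icc 3 k, #(colorClass c j)
        ≤ ∑ _j ∈ Icc 3 k, 1 := sum_le_sum fun j hj =>
          hc.card_colorClass_le_one hG fun u v => (hdist u v).trans (mem_Icc.mp hj).1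
      _ = k - 2 := by simp
  calc Fintype.card V ≤ ∑ j ∈ Icc 1 k, #(colorClass c j) := hc.card_le_sum_colorClass
    _ ≤ ∑ j ∈ insert 1 (insert 2 (Icc 3 k)), #(colorClass c j) :=
      sum_le_sum_of_subset hsplit
    _ ≤ #(colorClass c 1) + #(colorClass c 2) + (k - 2) := by
      rw [sum_insert (by simp), sum_insert (by simp)]
      omega

end IsPackingColoring

end PackingColoring

namespace completeBipartiteMinusMatching

variable {n : ℕ}

lemma adj_inl_inr {i j : Fin n} :
    (completeBipartiteMinusMatching n).Adj (.inl i) (.inr j) ↔ i ≠ j := Iff.rfl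

lemma adj_inr_inl {i j : Fin n} :
    (completeBipartiteMinusMatching n).Adj (.inr i) (.inl j) ↔ i ≠ j := Iff.rfl

lemma exists_adj (hn : 2 ≤ n) (u : Fin n ⊕ Fin n) :
    ∃ w, (completeBipartiteMinusMatching n).Adj u w := by
  have : Nontrivial (Fin n) := Fin.nontrivial_iff_two_le.mpr hn
  obtain ⟨j, hj⟩ := exists_ne (u.elim id id)
  rcases u with i | i
  exacts [⟨.inr j, adj_inl_inr.mpr hj.symm⟩, ⟨.inl j, adj_inr_inl.mpr hj.symm⟩]

lemma exists_walk_length_le_two_of_ne_swap (hn : 3 ≤ n) {u v : Fin n ⊕ Fin n}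
    (h : v ≠ u.swap) : ∃ p : (completeBipartiteMinusMatching n).Walk u v, p.length ≤ 2 := by
  rcases u with i | i <;> rcases v with j | j
  · obtain ⟨l, hli, hlj⟩ := Fin.exists_ne_and_ne_of_two_lt i j (by omega)
    exact ⟨.cons (adj_inl_inr.mpr hli.symm) (.cons (adj_inr_inl.mpr hlj) .nil), by simp⟩
  · exact ⟨.cons (adj_inl_inr.mpr fun hij => h (by simp [hij])) .nil, by simp⟩
  · exact ⟨.cons (adj_inr_inl.mpr fun hij => h (by simp [hij])) .nil, by simp⟩
  · obtain ⟨l, hli, hlj⟩ := Fin.exists_ne_and_ne_of_two_lt i j (by omega)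
    exact ⟨.cons (adj_inr_inl.mpr hli.symm) (.cons (adj_inl_inr.mpr hlj) .nil), by simp⟩

/-- Go to a neighbour `w` of `u` first: since `w ≠ u`, `u.swap` is not `w.swap`. -/
lemma exists_walk_length_le_three (hn : 3 ≤ n) (u v : Fin n ⊕ Fin n) :
    ∃ p : (completeBipartiteMinusMatching n).Walk u v, p.length ≤ 3 := by
  by_cases h : v = u.swap
  · subst h
    obtain ⟨w, huw⟩ := exists_adj (by omega) u
    obtain ⟨p, hp⟩ := exists_walk_length_le_two_of_ne_swap hn (u := w) (v := u.swap)
      fun h => huw.ne (Sum.swap_leftInverse.injective h)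
    exact ⟨.cons huw p, by simp; omega⟩
  · obtain ⟨p, hp⟩ := exists_walk_length_le_two_of_ne_swap hn h
    exact ⟨p, hp.trans (by norm_num)⟩

lemma connected (hn : 3 ≤ n) : (completeBipartiteMinusMatching n).Connected :=
  have : Nonempty (Fin n) := ⟨⟨0, by omega⟩⟩
  .mk fun u v => ⟨(exists_walk_length_le_three hn u v).choose⟩

lemma dist_le_three (hn : 3 ≤ n) (u v : Fin n ⊕ Fin n) :
    (completeBipartiteMinusMatching n).dist u v ≤ 3 :=
  have ⟨p, hp⟩ := exists_walk_length_le_three hn u v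
  (dist_le p).trans hp

lemma eq_swap_of_two_lt_dist (hn : 3 ≤ n) {u v : Fin n ⊕ Fin n}
    (h : 2 < (completeBipartiteMinusMatching n).dist u v) : v = u.swap := by
  by_contra hv
  obtain ⟨p, hp⟩ := exists_walk_length_le_two_of_ne_swap hn hv
  exact absurd ((dist_le p).trans hp) (by omega)

/-- `hs` is the independence of `s`; it forces `s` into one side or into one matched pair. -/
lemma card_le_max_card_two (s : Finset (Fin n ⊕ Fin n)) (T : Finset (Fin n))
    (hs : ∀ i j, .inl i ∈ s → .inr j ∈ s → i = j) (hleft : s.toLeft ⊆ T)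
    (hright : s.toRight ⊆ T) : #s ≤ max #T 2 := by
  rw [← card_toLeft_add_card_toRight]
  rcases s.toRight.eq_empty_or_nonempty with hR | ⟨j, hj⟩
  · simpa [hR] using Or.inl (card_le_card hleft)
  rcases s.toLeft.eq_empty_or_nonempty with hL | ⟨i, hi⟩
  · simpa [hL] using Or.inl (card_le_card hright)
  have hL : #s.toLeft ≤ 1 := card_le_one.mpr fun a ha b hb => by
    rw [mem_toLeft] at ha hb
    rw [hs a j ha (mem_toRight.mp hj), hs b j hb (mem_toRight.mp hj)]
  have hR : #s.toRight ≤ 1 := card_le_one.mpr fun a ha b hb => by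
    rw [mem_toRight] at ha hb
    rw [← hs i a (mem_toLeft.mp hi) ha, ← hs i b (mem_toLeft.mp hi) hb]
  omega

variable {k : ℕ} {c : Fin n ⊕ Fin n → ℕ}

lemma eq_of_inl_mem_colorClass_one_of_inr_mem
    (hc : IsPackingColoring (completeBipartiteMinusMatching n) k c) {i j : Fin n}
    (hi : .inl i ∈ colorClass c 1) (hj : .inr j ∈ colorClass c 1) : i = j := by
  by_contra hij
  rw [mem_colorClass] at hi hj
  exact hc.not_adj hi hj (adj_inl_inr.mpr hij)

lemma eq_swap_of_mem_colorClass_two (hn : 3 ≤ n)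
    (hc : IsPackingColoring (completeBipartiteMinusMatching n) k c) {u v : Fin n ⊕ Fin n}
    (hu : u ∈ colorClass c 2) (hv : v ∈ colorClass c 2) (huv : u ≠ v) : v = u.swap := by
  rw [mem_colorClass] at hu hv
  have := hc.2 u v huv (hu.trans hv.symm) (connected hn u v)
  exact eq_swap_of_two_lt_dist hn (hu ▸ this)

lemma card_colorClass_one_add_card_colorClass_two_le (hn : 3 ≤ n)
    (hc : IsPackingColoring (completeBipartiteMinusMatching n) k c) :
    #(colorClass c 1) + #(colorClass c 2) ≤ n + 1 := by
  have hindep : ∀ i j, .inl i ∈ colorClass c 1 → .inr j ∈ colorClass c 1 → i = j :=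
    fun _ _ => eq_of_inl_mem_colorClass_one_of_inr_mem hc
  by_cases h2 : #(colorClass c 2) ≤ 1
  · have := card_le_max_card_two _ univ hindep (subset_univ _) (subset_univ _)
    rw [card_univ, Fintype.card_fin, max_eq_left (by omega)] at this
    omega
  obtain ⟨u, hu, v, hv, huv⟩ := one_lt_card.mp (not_le.mp h2)
  have hpair : colorClass c 2 ⊆ {u, u.swap} := fun w hw => by
    rcases eq_or_ne u w with rfl | huw
    · simp
    · simp [eq_swap_of_mem_colorClass_two hn hc hu hw huw]
  obtain ⟨a, hla, hra⟩ : ∃ a, .inl a ∈ colorClass c 2 ∧ .inr a ∈ colorClass c 2 := by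
    rw [eq_swap_of_mem_colorClass_two hn hc hu hv huv] at hv
    rcases u with a | a
    exacts [⟨a, hu, hv⟩, ⟨a, hv, hu⟩]
  have hmiss : ∀ w ∈ colorClass c 1, w ∉ colorClass c 2 := fun w h1 h2 => by
    rw [mem_colorClass] at h1 h2
    omega
  have h1 := card_le_max_card_two _ (univ.erase a) hindep
    (fun i hi => mem_erase.mpr ⟨by rintro rfl; exact hmiss _ (mem_toLeft.mp hi) hla,
      mem_univ _⟩)
    (fun i hi => mem_erase.mpr ⟨by rintro rfl; exact hmiss _ (mem_toRight.mp hi) hra,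
      mem_univ _⟩)
  rw [card_erase_of_mem (mem_univ _), card_univ, Fintype.card_fin,
    max_eq_left (by omega)] at h1
  have := (card_le_card hpair).trans card_le_two
  omega

lemma le_of_isPackingColoring (hn : 3 ≤ n)
    (hc : IsPackingColoring (completeBipartiteMinusMatching n) k c) : n + 1 ≤ k := by
  have hcard := hc.card_le_of_dist_le_three (connected hn) (dist_le_three hn)
  have := card_colorClass_one_add_card_colorClass_two_le hn hc
  simp only [Fintype.card_sum, Fintype.card_fin] at hcard
  omega

lemma isPackingColoring_sumElim :
    IsPackingColoring (completeBipartiteMinusMatching n) (n + 1)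
      (Sum.elim (fun _ => 1) (fun i => i + 2)) := by
  refine ⟨?_, ?_⟩
  · rintro (i | i) <;> simp
  rintro (i | i) (j | j) hne hcc hr
  · have hpos := hr.pos_dist_of_ne hne
    have hne1 : (completeBipartiteMinusMatching n).dist (.inl i) (.inl j) ≠ 1 :=
      dist_eq_one_iff_adj.not.mpr id
    simp only [Sum.elim_inl]
    omega
  · simp at hcc
  · simp at hcc
  · simp only [Sum.elim_inr, add_left_inj] at hcc
    exact absurd (congrArg Sum.inr (Fin.ext hcc)) hne

end completeBipartiteMinusMatching

/-- For `n ≥ 4`, the graph `K_{n,n}` minus a perfect matching satisfies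
`χρ(K_{n,n} - M) = n + 1`. -/
theorem packingChromaticNumber_completeBipartiteMinusMatching (n : ℕ) (hn : 4 ≤ n) :
    packingChromaticNumber (completeBipartiteMinusMatching n) = n + 1 :=
  packingChromaticNumber_eq ⟨_, completeBipartiteMinusMatching.isPackingColoring_sumElim⟩
    fun _ _ hc => completeBipartiteMinusMatching.le_of_isPackingColoring (by omega) hc
end
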